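/- Let R > 0 and φ > 0, let K be a positive integer, and let ρ : Fin (2K) → ℝ be a family enumerated as {+ρ_k, −ρ_k : k = 1,…,K} with each ρ_k ≥ 0 and not all ρ_k equal to zero. Set M = max_i |ρ_i| and σ_ρ = sqrt( (2K)^{-1} ∑_i ρ_i² ), and define h(θ) = E_τ[ (1/2) log{ 1 + 2 cosh(2Rθ) e^{−2φ√R τ − 2R} + e^{−4φ√R τ − 4R} } ] and F = (2K)^{-1} ∑_{i=1}^{2K} E_τ[ log{ 1 + e^{−2Rρ_i} e^{−2φ√R τ − 2R} } ]. Then F ≤ h(0) + (σ_ρ / M) ( h(M) − h(0) ). -/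

import Mathlib

open MeasureTheory Real

/-- Expectation with respect to a standard Gaussian variable `τ`. -/
noncomputable def gaussExp (p : ℝ → ℝ) : ℝ :=
  ∫ τ : ℝ, (Real.sqrt (2 * Real.pi))⁻¹ * Real.exp (-τ ^ 2 / 2) * p τ

/-- Two-point Hölder inequality. -/
lemma holder2 {q r t : ℝ} (hq : 0 ≤ q) (hr : 0 ≤ r) (ht0 : 0 ≤ t) (ht1 : t ≤ 1) :
    1 + q ^ t * r ^ (1 - t) ≤ (1 + q) ^ t * (1 + r) ^ (1 - t) := by
  set u := 1 - t with hu
  have hu0 : 0 ≤ u := by linarith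
  have hA : (0:ℝ) < 1 + q := by linarith
  have hB : (0:ℝ) < 1 + r := by linarith
  have hP : 0 < (1 + q) ^ t * (1 + r) ^ u :=
    mul_pos (Real.rpow_pos_of_pos hA t) (Real.rpow_pos_of_pos hB u)
  rw [← div_le_one hP]
  have h1 : (1 / (1+q)) ^ t * (1 / (1+r)) ^ u ≤ t * (1/(1+q)) + u * (1/(1+r)) :=
    Real.geom_mean_le_arith_mean2_weighted ht0 hu0 (by positivity) (by positivity) (by linarith)
  have h2 : (q / (1+q)) ^ t * (r / (1+r)) ^ u ≤ t * (q/(1+q)) + u * (r/(1+r)) :=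
    Real.geom_mean_le_arith_mean2_weighted ht0 hu0 (by positivity) (by positivity) (by linarith)
  have e1 : (1 / (1+q)) ^ t * (1 / (1+r)) ^ u = 1 / ((1+q)^t * (1+r)^u) := by
    rw [Real.div_rpow zero_le_one hA.le, Real.div_rpow zero_le_one hB.le,
      Real.one_rpow, Real.one_rpow]
    field_simp
  have e2 : (q / (1+q)) ^ t * (r / (1+r)) ^ u = (q^t * r^u) / ((1+q)^t * (1+r)^u) := by
    rw [Real.div_rpow hq hA.le, Real.div_rpow hr hB.le]
    field_simp
  have key : 1 / ((1+q)^t * (1+r)^u) + (q^t * r^u) / ((1+q)^t * (1+r)^u) ≤ 1 := by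
    rw [← e1, ← e2]
    calc (1 / (1+q)) ^ t * (1 / (1+r)) ^ u + (q / (1+q)) ^ t * (r / (1+r)) ^ u
        ≤ (t * (1/(1+q)) + u * (1/(1+r))) + (t * (q/(1+q)) + u * (r/(1+r))) := by linarith
      _ = t * ((1+q)/(1+q)) + u * ((1+r)/(1+r)) := by ring
      _ = 1 := by rw [div_self hA.ne', div_self hB.ne']; linarith
  calc (1 + q ^ t * r ^ u) / ((1+q)^t * (1+r)^u)
      = 1 / ((1+q)^t * (1+r)^u) + (q^t * r^u) / ((1+q)^t * (1+r)^u) := by ring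
    _ ≤ 1 := key

/-- Chord bound for `log (1 + exp ·)`. -/
lemma log_one_add_exp_chord {x y t : ℝ} (ht0 : 0 ≤ t) (ht1 : t ≤ 1) :
    Real.log (1 + Real.exp (t * x + (1 - t) * y)) ≤
      t * Real.log (1 + Real.exp x) + (1 - t) * Real.log (1 + Real.exp y) := by
  have hq := (Real.exp_pos x).le
  have hr := (Real.exp_pos y).le
  have h := holder2 hq hr ht0 ht1
  have e : Real.exp x ^ t * Real.exp y ^ (1 - t) = Real.exp (t * x + (1 - t) * y) := by
    rw [← Real.exp_mul, ← Real.exp_mul, ← Real.exp_add]; ring_nf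
  rw [e] at h
  have hL : (0:ℝ) < 1 + Real.exp (t * x + (1 - t) * y) := by positivity
  have hx : (0:ℝ) < 1 + Real.exp x := by positivity
  have hy : (0:ℝ) < 1 + Real.exp y := by positivity
  calc Real.log (1 + Real.exp (t * x + (1 - t) * y))
      ≤ Real.log ((1 + Real.exp x) ^ t * (1 + Real.exp y) ^ (1 - t)) :=
        Real.log_le_log hL h
    _ = t * Real.log (1 + Real.exp x) + (1 - t) * Real.log (1 + Real.exp y) := by
        rw [Real.log_mul (by positivity) (by positivity), Real.log_rpow hx, Real.log_rpow hy]

lemma log_one_add_mul_exp_le (a c τ : ℝ) (ha : 0 ≤ a) :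
    Real.log (1 + a * Real.exp (c * τ)) ≤ Real.log (1 + a) + Real.log 2 + |c| * |τ| := by
  have h1 : Real.log (1 + a * Real.exp (c * τ)) ≤
      Real.log (1 + a) + Real.log (1 + Real.exp (c * τ)) := by
    rw [← Real.log_mul (by positivity) (by positivity)]
    apply Real.log_le_log (by positivity)
    nlinarith [Real.exp_pos (c * τ), mul_nonneg ha (Real.exp_pos (c*τ)).le]
  have h2 : Real.log (1 + Real.exp (c * τ)) ≤ Real.log 2 + |c| * |τ| := by
    have hb : 1 + Real.exp (c * τ) ≤ 2 * Real.exp (|c| * |τ|) := by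
      have e1 : Real.exp (c * τ) ≤ Real.exp (|c| * |τ|) :=
        Real.exp_le_exp.2 (le_trans (le_abs_self _) (by rw [abs_mul]))
      have e2 : (1:ℝ) ≤ Real.exp (|c| * |τ|) :=
        Real.one_le_exp (by positivity)
      linarith
    calc Real.log (1 + Real.exp (c * τ)) ≤ Real.log (2 * Real.exp (|c| * |τ|)) :=
          Real.log_le_log (by positivity) hb
      _ = Real.log 2 + |c| * |τ| := by rw [Real.log_mul two_ne_zero (Real.exp_ne_zero _),
          Real.log_exp]
  linarith

lemma integrable_dens_log (a c : ℝ) (ha : 0 < a) :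
    Integrable (fun τ : ℝ => (Real.sqrt (2 * Real.pi))⁻¹ * Real.exp (-τ ^ 2 / 2) *
      Real.log (1 + a * Real.exp (c * τ))) := by
  have hgauss : Integrable (fun τ : ℝ => Real.exp (-τ ^ 2 / 2)) := by
    have := integrable_exp_neg_mul_sq (by norm_num : (0:ℝ) < 1/2)
    refine this.congr (Filter.Eventually.of_forall fun x => ?_)
    ring_nf
  have habs : Integrable (fun τ : ℝ => |τ| * Real.exp (-τ ^ 2 / 2)) := by
    have := (integrable_mul_exp_neg_mul_sq (by norm_num : (0:ℝ) < 1/2)).abs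
    refine this.congr (Filter.Eventually.of_forall fun x => ?_)
    show |x * Real.exp (-(1/2) * x ^ 2)| = _
    rw [abs_mul, abs_of_nonneg (Real.exp_pos _).le]
    ring_nf
  have hdom : Integrable (fun τ : ℝ => (Real.sqrt (2 * Real.pi))⁻¹ *
      ((Real.log (1 + a) + Real.log 2) * Real.exp (-τ ^ 2 / 2) +
        |c| * (|τ| * Real.exp (-τ ^ 2 / 2)))) :=
    (((hgauss.const_mul _).add (habs.const_mul _)).const_mul _)
  refine hdom.mono' ?_ (Filter.Eventually.of_forall fun τ => ?_)
  · refine Continuous.aestronglyMeasurable ?_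
    refine (continuous_const.mul (by fun_prop)).mul ?_
    exact Continuous.log (by fun_prop) (fun τ => by positivity)
  · have hlog0 : 0 ≤ Real.log (1 + a * Real.exp (c * τ)) := by
      apply Real.log_nonneg; nlinarith [Real.exp_pos (c*τ), mul_nonneg ha.le (Real.exp_pos (c*τ)).le]
    have hd0 : (0:ℝ) ≤ (Real.sqrt (2 * Real.pi))⁻¹ * Real.exp (-τ ^ 2 / 2) := by positivity
    rw [Real.norm_eq_abs, abs_of_nonneg (mul_nonneg hd0 hlog0)]
    have hb := log_one_add_mul_exp_le a c τ ha.le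
    have hexp := (Real.exp_pos (-τ^2/2)).le
    have hsq : (0:ℝ) ≤ (Real.sqrt (2*Real.pi))⁻¹ := by positivity
    calc (Real.sqrt (2 * Real.pi))⁻¹ * Real.exp (-τ ^ 2 / 2) * Real.log (1 + a * Real.exp (c * τ))
        ≤ (Real.sqrt (2 * Real.pi))⁻¹ * Real.exp (-τ ^ 2 / 2) *
            (Real.log (1 + a) + Real.log 2 + |c| * |τ|) := by
          exact mul_le_mul_of_nonneg_left hb hd0
      _ = (Real.sqrt (2 * Real.pi))⁻¹ *
          ((Real.log (1 + a) + Real.log 2) * Real.exp (-τ ^ 2 / 2) +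
            |c| * (|τ| * Real.exp (-τ ^ 2 / 2))) := by ring

/-- Integral of the Gaussian density against `log (1 + e^s e^{cτ})`. -/
noncomputable def Gi (s c : ℝ) : ℝ :=
  ∫ τ : ℝ, (Real.sqrt (2 * Real.pi))⁻¹ * Real.exp (-τ ^ 2 / 2) *
    Real.log (1 + Real.exp s * Real.exp (c * τ))

lemma Gi_integrable (s c : ℝ) :
    Integrable (fun τ : ℝ => (Real.sqrt (2 * Real.pi))⁻¹ * Real.exp (-τ ^ 2 / 2) *
      Real.log (1 + Real.exp s * Real.exp (c * τ))) :=
  integrable_dens_log (Real.exp s) c (Real.exp_pos s)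

lemma Gi_chord (x y c : ℝ) {t : ℝ} (ht0 : 0 ≤ t) (ht1 : t ≤ 1) :
    Gi (t * x + (1 - t) * y) c ≤ t * Gi x c + (1 - t) * Gi y c := by
  have hx := Gi_integrable x c
  have hy := Gi_integrable y c
  have key : Gi (t * x + (1 - t) * y) c ≤
      ∫ τ : ℝ, (t * ((Real.sqrt (2 * Real.pi))⁻¹ * Real.exp (-τ ^ 2 / 2) *
          Real.log (1 + Real.exp x * Real.exp (c * τ))) +
        (1 - t) * ((Real.sqrt (2 * Real.pi))⁻¹ * Real.exp (-τ ^ 2 / 2) *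
          Real.log (1 + Real.exp y * Real.exp (c * τ)))) := by
    refine integral_mono (Gi_integrable _ c) ((hx.const_mul t).add (hy.const_mul (1 - t)))
      fun τ => ?_
    have hd0 : (0:ℝ) ≤ (Real.sqrt (2 * Real.pi))⁻¹ * Real.exp (-τ ^ 2 / 2) := by positivity
    have hc : Real.log (1 + Real.exp (t * x + (1 - t) * y) * Real.exp (c * τ)) ≤
        t * Real.log (1 + Real.exp x * Real.exp (c * τ)) +
        (1 - t) * Real.log (1 + Real.exp y * Real.exp (c * τ)) := by
      have e : ∀ s : ℝ, Real.exp s * Real.exp (c * τ) = Real.exp (s + c * τ) := fun s => by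
        rw [← Real.exp_add]
      rw [e, e, e]
      have := log_one_add_exp_chord (x := x + c * τ) (y := y + c * τ) ht0 ht1
      have harg : t * (x + c * τ) + (1 - t) * (y + c * τ) = t * x + (1 - t) * y + c * τ := by
        ring
      rw [harg] at this
      exact this
    calc (Real.sqrt (2 * Real.pi))⁻¹ * Real.exp (-τ ^ 2 / 2) *
        Real.log (1 + Real.exp (t * x + (1 - t) * y) * Real.exp (c * τ))
        ≤ (Real.sqrt (2 * Real.pi))⁻¹ * Real.exp (-τ ^ 2 / 2) *
          (t * Real.log (1 + Real.exp x * Real.exp (c * τ)) +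
            (1 - t) * Real.log (1 + Real.exp y * Real.exp (c * τ))) :=
          mul_le_mul_of_nonneg_left hc hd0
      _ = _ := by ring
  rw [integral_add (hx.const_mul t) (hy.const_mul (1 - t)),
      integral_const_mul, integral_const_mul] at key
  exact key

lemma hh_factor (R φ θ τ : ℝ) :
    1 + 2 * Real.cosh (2 * R * θ) * Real.exp (-2 * φ * Real.sqrt R * τ - 2 * R) +
      Real.exp (-4 * φ * Real.sqrt R * τ - 4 * R)
    = (1 + Real.exp (-2 * R * θ - 2 * R) * Real.exp (-2 * φ * Real.sqrt R * τ)) *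
      (1 + Real.exp (2 * R * θ - 2 * R) * Real.exp (-2 * φ * Real.sqrt R * τ)) := by
  have h1 : Real.exp (-2 * φ * Real.sqrt R * τ - 2 * R) =
      Real.exp (-2 * φ * Real.sqrt R * τ) * Real.exp (-(2 * R)) := by
    rw [← Real.exp_add]; congr 1 <;> ring
  have h2 : Real.exp (-4 * φ * Real.sqrt R * τ - 4 * R) =
      Real.exp (-2 * φ * Real.sqrt R * τ) * Real.exp (-(2 * R)) *
        (Real.exp (-2 * φ * Real.sqrt R * τ) * Real.exp (-(2 * R))) := by
    rw [← Real.exp_add, ← Real.exp_add]; congr 1 <;> ring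
  have h3 : Real.exp (-2 * R * θ - 2 * R) =
      Real.exp (-(2 * R * θ)) * Real.exp (-(2 * R)) := by
    rw [← Real.exp_add]; congr 1 <;> ring
  have h4 : Real.exp (2 * R * θ - 2 * R) =
      Real.exp (2 * R * θ) * Real.exp (-(2 * R)) := by
    rw [← Real.exp_add]; congr 1 <;> ring
  have h5 := Real.cosh_eq (2 * R * θ)
  have h6 : Real.exp (2 * R * θ) * Real.exp (-(2 * R * θ)) = 1 := by
    rw [← Real.exp_add]; simp
  rw [h1, h2, h3, h4, h5]
  linear_combination (-(Real.exp (-2 * φ * Real.sqrt R * τ) * Real.exp (-(2 * R)))^2) * h6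

lemma h_as_Gi (R φ θ : ℝ) :
    gaussExp (fun τ =>
      (1 / 2) * Real.log (1 + 2 * Real.cosh (2 * R * θ) *
        Real.exp (-2 * φ * Real.sqrt R * τ - 2 * R) +
        Real.exp (-4 * φ * Real.sqrt R * τ - 4 * R)))
    = (1 / 2) * (Gi (-2 * R * θ - 2 * R) (-2 * φ * Real.sqrt R) +
        Gi (2 * R * θ - 2 * R) (-2 * φ * Real.sqrt R)) := by
  unfold gaussExp Gi
  have hA : ∀ τ : ℝ, (0:ℝ) < 1 + Real.exp (-2 * R * θ - 2 * R) *
      Real.exp (-2 * φ * Real.sqrt R * τ) := fun τ => by positivity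
  have hB : ∀ τ : ℝ, (0:ℝ) < 1 + Real.exp (2 * R * θ - 2 * R) *
      Real.exp (-2 * φ * Real.sqrt R * τ) := fun τ => by positivity
  have key : (fun τ : ℝ => (Real.sqrt (2 * Real.pi))⁻¹ * Real.exp (-τ ^ 2 / 2) *
      ((1 / 2) * Real.log (1 + 2 * Real.cosh (2 * R * θ) *
        Real.exp (-2 * φ * Real.sqrt R * τ - 2 * R) +
        Real.exp (-4 * φ * Real.sqrt R * τ - 4 * R))))
      = fun τ : ℝ => (1/2) * ((Real.sqrt (2 * Real.pi))⁻¹ * Real.exp (-τ ^ 2 / 2) *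
          Real.log (1 + Real.exp (-2 * R * θ - 2 * R) * Real.exp (-2 * φ * Real.sqrt R * τ)) +
        (Real.sqrt (2 * Real.pi))⁻¹ * Real.exp (-τ ^ 2 / 2) *
          Real.log (1 + Real.exp (2 * R * θ - 2 * R) * Real.exp (-2 * φ * Real.sqrt R * τ))) := by
    funext τ
    rw [hh_factor R φ θ τ, Real.log_mul (hA τ).ne' (hB τ).ne']
    ring
  rw [key, integral_const_mul,
    integral_add (Gi_integrable (-2 * R * θ - 2 * R) (-2 * φ * Real.sqrt R))
      (Gi_integrable (2 * R * θ - 2 * R) (-2 * φ * Real.sqrt R))]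

lemma F_term_as_Gi (R φ θ : ℝ) :
    gaussExp (fun τ => Real.log (1 + Real.exp (-2 * R * θ) *
        Real.exp (-2 * φ * Real.sqrt R * τ - 2 * R)))
    = Gi (-2 * R * θ - 2 * R) (-2 * φ * Real.sqrt R) := by
  unfold gaussExp Gi
  congr 1
  funext τ
  have e : Real.exp (-2 * R * θ) * Real.exp (-2 * φ * Real.sqrt R * τ - 2 * R)
      = Real.exp (-2 * R * θ - 2 * R) * Real.exp (-2 * φ * Real.sqrt R * τ) := by
    rw [← Real.exp_add, ← Real.exp_add]; congr 1 <;> ring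
  simp only [e]

/-- The upper bound `F^{u1}` of the paper: the chord of the convex increasing function
`h` between `θ = 0` and `θ = M = |ρ|_max`, evaluated at `θ = σ_ρ`, upper-bounds `F`. -/
theorem F_le_Fu1
    (R φ : ℝ) (hR : 0 < R) (hφ : 0 < φ)
    (K : ℕ) (hK : 0 < K) (ρ : Fin (2 * K) → ℝ)
    (e : Fin K ⊕ Fin K ≃ Fin (2 * K)) (ρp : Fin K → ℝ)
    (hpos : ∀ k, ρ (e (Sum.inl k)) = ρp k)
    (hneg : ∀ k, ρ (e (Sum.inr k)) = -ρp k)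
    (hρp0 : ∀ k, 0 ≤ ρp k) (hρpne : ∃ k, ρp k ≠ 0)
    (M : ℝ) (hM : IsGreatest (Set.range fun i => |ρ i|) M)
    (σρ : ℝ) (hσρ : σρ = Real.sqrt (((2 * K : ℕ) : ℝ)⁻¹ * ∑ i, (ρ i) ^ 2))
    (h : ℝ → ℝ)
    (hh : ∀ θ, h θ = gaussExp (fun τ =>
      (1 / 2) * Real.log (1 + 2 * Real.cosh (2 * R * θ) *
        Real.exp (-2 * φ * Real.sqrt R * τ - 2 * R) +
        Real.exp (-4 * φ * Real.sqrt R * τ - 4 * R))))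
    (F : ℝ)
    (hF : F = ((2 * K : ℕ) : ℝ)⁻¹ * ∑ i, gaussExp (fun τ =>
      Real.log (1 + Real.exp (-2 * R * ρ i) *
        Real.exp (-2 * φ * Real.sqrt R * τ - 2 * R)))) :
    F ≤ h 0 + (σρ / M) * (h M - h 0) := by
  have hK0 : (0:ℝ) < (K:ℝ) := by exact_mod_cast hK
  set c : ℝ := -2 * φ * Real.sqrt R with hc
  -- basic facts about M
  have hMρ : ∀ i, |ρ i| ≤ M := fun i => hM.2 ⟨i, rfl⟩
  have hρpM : ∀ k, ρp k ≤ M := fun k => by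
    have := hMρ (e (Sum.inl k)); rw [hpos k] at this
    exact (abs_le.1 this).2
  have hMpos : 0 < M := by
    obtain ⟨k0, hk0⟩ := hρpne
    exact lt_of_lt_of_le (lt_of_le_of_ne (hρp0 k0) (Ne.symm hk0)) (hρpM k0)
  -- splitting sums over the enumeration
  have sum_split : ∀ f : ℝ → ℝ,
      ∑ i : Fin (2 * K), f (ρ i) = ∑ k, f (ρp k) + ∑ k, f (-ρp k) := by
    intro f
    rw [← Equiv.sum_comp e (fun i => f (ρ i)), Fintype.sum_sum_type]
    simp [hpos, hneg]
  -- values of h via Gi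
  have hGi0 : h 0 = Gi (-(2*R)) c := by
    rw [hh 0, h_as_Gi]
    rw [show -2*R*(0:ℝ) - 2*R = -(2*R) from by ring, show 2*R*(0:ℝ) - 2*R = -(2*R) from by ring]
    ring
  have hhM : h M = (1/2) * (Gi (-2*R*M - 2*R) c + Gi (2*R*M - 2*R) c) := by
    rw [hh M, h_as_Gi]
  -- h is increasing between 0 and M
  have h0leM : h 0 ≤ h M := by
    have hmid : -(2*R) = (1/2 : ℝ) * (-2*R*M - 2*R) + (1 - 1/2) * (2*R*M - 2*R) := by ring
    calc h 0 = Gi (-(2*R)) c := hGi0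
      _ = Gi ((1/2 : ℝ) * (-2*R*M - 2*R) + (1 - 1/2) * (2*R*M - 2*R)) c := by rw [← hmid]
      _ ≤ (1/2) * Gi (-2*R*M - 2*R) c + (1 - 1/2) * Gi (2*R*M - 2*R) c :=
        Gi_chord _ _ _ (by norm_num) (by norm_num)
      _ = h M := by rw [hhM]; ring
  -- chord bound for each k
  set t : Fin K → ℝ := fun k => ρp k / M with ht
  have ht0 : ∀ k, 0 ≤ t k := fun k => div_nonneg (hρp0 k) hMpos.le
  have ht1 : ∀ k, t k ≤ 1 := fun k => (div_le_one hMpos).2 (hρpM k)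
  have hchord : ∀ k, h (ρp k) ≤ (1 - t k) * h 0 + t k * h M := by
    intro k
    have ea : -2*R*ρp k - 2*R = t k * (-2*R*M - 2*R) + (1 - t k) * (-(2*R)) := by
      simp only [ht]; field_simp; ring
    have eb : 2*R*ρp k - 2*R = t k * (2*R*M - 2*R) + (1 - t k) * (-(2*R)) := by
      simp only [ht]; field_simp; ring
    have cA : Gi (-2*R*ρp k - 2*R) c ≤ t k * Gi (-2*R*M - 2*R) c + (1 - t k) * Gi (-(2*R)) c := by
      rw [ea]; exact Gi_chord _ _ _ (ht0 k) (ht1 k)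
    have cB : Gi (2*R*ρp k - 2*R) c ≤ t k * Gi (2*R*M - 2*R) c + (1 - t k) * Gi (-(2*R)) c := by
      rw [eb]; exact Gi_chord _ _ _ (ht0 k) (ht1 k)
    rw [hh (ρp k), h_as_Gi, hGi0, hhM]
    linarith
  -- F as an average of h over the ρp's
  have hFsum : F = ((2 * K : ℕ) : ℝ)⁻¹ * ∑ k, (2 * h (ρp k)) := by
    rw [hF]
    rw [Finset.sum_congr rfl fun i _ => F_term_as_Gi R φ (ρ i)]
    congr 1
    rw [sum_split (fun x => Gi (-2*R*x - 2*R) c), ← Finset.sum_add_distrib]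
    refine Finset.sum_congr rfl fun k _ => ?_
    rw [hh (ρp k), h_as_Gi]
    rw [show -2*R*(-ρp k) - 2*R = 2*R*ρp k - 2*R from by ring]
    ring
  set T : ℝ := ∑ k, t k with hT
  -- bound F by the chord average
  have hFle : F ≤ h 0 + (T / (K:ℝ)) * (h M - h 0) := by
    rw [hFsum]
    have hsum_le : ∑ k, (2 * h (ρp k)) ≤ ∑ k, (2 * ((1 - t k) * h 0 + t k * h M)) :=
      Finset.sum_le_sum fun k _ => by linarith [hchord k]
    have hrhs : ∑ k, (2 * ((1 - t k) * h 0 + t k * h M)) =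
        2 * ((K:ℝ) * h 0 - T * h 0 + T * h M) := by
      rw [← Finset.mul_sum, Finset.sum_add_distrib, ← Finset.sum_mul, ← Finset.sum_mul,
        Finset.sum_sub_distrib, Finset.sum_const, Finset.card_univ, Fintype.card_fin,
        nsmul_eq_mul, mul_one]
      ring
    have hpos2K : (0:ℝ) ≤ ((2 * K : ℕ) : ℝ)⁻¹ := by positivity
    calc ((2 * K : ℕ) : ℝ)⁻¹ * ∑ k, (2 * h (ρp k))
        ≤ ((2 * K : ℕ) : ℝ)⁻¹ * (2 * ((K:ℝ) * h 0 - T * h 0 + T * h M)) := by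
          rw [← hrhs]; exact mul_le_mul_of_nonneg_left hsum_le hpos2K
      _ = h 0 + (T / (K:ℝ)) * (h M - h 0) := by
          push_cast
          field_simp
          ring
  -- Cauchy–Schwarz: T / K ≤ σρ / M
  set S : ℝ := ∑ k, ρp k with hS
  have hTS : T = S / M := by rw [hT, hS, ← Finset.sum_div]
  have hS0 : 0 ≤ S := Finset.sum_nonneg fun k _ => hρp0 k
  have hcs : S ^ 2 ≤ (K:ℝ) * ∑ k, (ρp k) ^ 2 := by
    have := sq_sum_le_card_mul_sum_sq (s := (Finset.univ : Finset (Fin K))) (f := ρp)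
    simpa using this
  have hsum2 : ∑ i : Fin (2 * K), (ρ i) ^ 2 = 2 * ∑ k, (ρp k) ^ 2 := by
    rw [sum_split (fun x => x ^ 2)]
    simp [neg_pow]
    ring
  have hAσ : S / (K:ℝ) ≤ σρ := by
    have h1 : (S / (K:ℝ)) ^ 2 ≤ (K:ℝ)⁻¹ * ∑ k, (ρp k) ^ 2 := by
      rw [div_pow, div_le_iff₀ (by positivity : (0:ℝ) < (K:ℝ)^2)]
      calc S ^ 2 ≤ (K:ℝ) * ∑ k, (ρp k) ^ 2 := hcs
        _ = (K:ℝ)⁻¹ * (∑ k, (ρp k) ^ 2) * (K:ℝ)^2 := by field_simp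
    calc S / (K:ℝ) = Real.sqrt ((S / (K:ℝ)) ^ 2) := (Real.sqrt_sq (by positivity)).symm
      _ ≤ Real.sqrt ((K:ℝ)⁻¹ * ∑ k, (ρp k) ^ 2) := Real.sqrt_le_sqrt h1
      _ = σρ := by
          rw [hσρ, hsum2]
          congr 1
          push_cast
          field_simp
  -- conclude
  have hcoef : T / (K:ℝ) ≤ σρ / M := by
    rw [hTS, div_div, mul_comm M (K:ℝ), ← div_div]
    gcongr
  calc F ≤ h 0 + (T / (K:ℝ)) * (h M - h 0) := hFle
    _ ≤ h 0 + (σρ / M) * (h M - h 0) :=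
        add_le_add_right (mul_le_mul_of_nonneg_right hcoef (sub_nonneg.2 h0leM)) _
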